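/- arXiv:2009.04900 — 2 statements merged into one kernel-verified Lean document; each statement's English description precedes it below -/
import Mathlib

section
/- Let Q_{S5}(x) = 1 + Σ_{n≥1} |A_{S5}(n)| xⁿ be the formal power series in x over ℚ counting the paths in A_{S5}(n). Then 2x(x−2) · Q_{S5}(x) = −1 + √(1−8x+12x²−4x³), where the square root denotes the unique formal power series with constant term 1 whose square is 1−8x+12x²−4x³. -/
/-- A lattice path from `(0,0)` to `(2n,0)` with steps in `S` that never goes
below the x-axis, encoded as the list of its steps. -/
def IsPath (S : Set (ℤ × ℤ)) (n : ℕ) (p : List (ℤ × ℤ)) : Prop :=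
  (∀ s ∈ p, s ∈ S) ∧
  (p.map Prod.fst).sum = 2 * n ∧
  (p.map Prod.snd).sum = 0 ∧
  ∀ q : List (ℤ × ℤ), q <+: p → 0 ≤ (q.map Prod.snd).sum

def S1 : Set (ℤ × ℤ) := {(1, 1), (1, -1)}
def S2 : Set (ℤ × ℤ) := {s | ∃ r : ℤ, 0 < r ∧ (s = (r, r) ∨ s = (r, -r))}
def S3 : Set (ℤ × ℤ) := {(1, 1), (1, -1), (2, 0)}
def S4 : Set (ℤ × ℤ) := {s | ∃ r : ℤ, 0 < r ∧ (s = (r, r) ∨ s = (r, -r) ∨ s = (2 * r, 0))}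
def S5 : Set (ℤ × ℤ) := {s | s = (1, 1) ∨ s = (1, -1) ∨ ∃ r : ℤ, 0 < r ∧ s = (2 * r, 0)}
def S6 : Set (ℤ × ℤ) := {s | (∃ r : ℤ, 0 < r ∧ (s = (r, r) ∨ s = (r, -r))) ∨ s = (2, 0)}

/-- Number of runs: vertices lying between two consecutive steps of the same kind. -/
def runs (p : List (ℤ × ℤ)) : ℕ :=
  (p.zip p.tail).countP (fun q => q.1 == q.2)

/-- Number of diagonal runs: vertices between two consecutive equal non-horizontal steps. -/
def dr (p : List (ℤ × ℤ)) : ℕ :=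
  (p.zip p.tail).countP (fun q => q.1 == q.2 && q.1.2 != 0)

/-- Number of horizontal runs: vertices between two consecutive horizontal steps. -/
def hr (p : List (ℤ × ℤ)) : ℕ :=
  (p.zip p.tail).countP (fun q => q.1 == q.2 && q.1.2 == 0)

/-- The path has no horizontal step lying on the x-axis. -/
def NoFlatOnAxis (p : List (ℤ × ℤ)) : Prop :=
  ∀ q s, q ++ [s] <+: p → s.2 = 0 → (q.map Prod.snd).sum ≠ 0

/-! A nonempty path of `L_{S5}` either starts with a horizontal step `(2(i+1), 0)` followed by a
path of `L_{S5}(j)`, `i + j = n`, or it decomposes at its first return to the axis as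
`U m D r` with `m ∈ L_{S5}(i)`, `r ∈ L_{S5}(j)`. A path of `A_{S5}` cannot start with a horizontal
step, and `U m D r` lies in `A_{S5}` exactly when `r` does, since `m` is lifted off the axis.
For the generating functions `L` and `Q` this gives `L = 1 + x (L / (1 - x) + L²)` and
`Q = 1 + x L Q`; eliminating `L` leaves `Q = 1 - x + x (2 - x) Q²`, i.e.
`(1 + 2x(x - 2) Q)² = 1 - 8x + 12x² - 4x³`, and a square root with constant term `1` is unique. -/

namespace List

variable {α : Type*}

theorem forall_prefix_cons_iff {P : List α → Prop} {a : α} {l : List α} :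
    (∀ q, q <+: a :: l → P q) ↔ P [] ∧ ∀ q, q <+: l → P (a :: q) := by
  simp only [prefix_cons_iff]
  refine ⟨fun h => ⟨h [] (.inl rfl), fun q hq => h _ (.inr ⟨q, rfl, hq⟩)⟩, ?_⟩
  rintro ⟨h0, h⟩ q (rfl | ⟨t, rfl, ht⟩)
  exacts [h0, h t ht]

theorem forall_prefix_append_iff {P : List α → Prop} {l₁ l₂ : List α} :
    (∀ q, q <+: l₁ ++ l₂ → P q) ↔
      (∀ q, q <+: l₁ → P q) ∧ ∀ q, q <+: l₂ → P (l₁ ++ q) := by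
  refine ⟨fun h => ⟨fun q hq => h q (prefix_append_of_prefix hq),
    fun q hq => h _ ((prefix_append_right_inj l₁).2 hq)⟩, ?_⟩
  rintro ⟨h₁, h₂⟩ q hq
  rcases prefix_or_prefix_of_prefix hq (prefix_append l₁ l₂) with hq₁ | ⟨t, rfl⟩
  · exact h₁ q hq₁
  · exact h₂ t ((prefix_append_right_inj l₁).1 hq)

theorem concat_prefix_append {q l₁ l₂ : List α} {a : α} (h : q ++ [a] <+: l₁ ++ l₂) :
    q ++ [a] <+: l₁ ∨ ∃ t, q = l₁ ++ t ∧ t ++ [a] <+: l₂ := by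
  rcases prefix_or_prefix_of_prefix h (prefix_append l₁ l₂) with h₁ | h₁
  · exact .inl h₁
  rcases prefix_concat_iff.1 h₁ with h₁ | ⟨t, rfl⟩
  · exact .inl (h₁ ▸ prefix_refl _)
  · exact .inr ⟨t, rfl, (prefix_append_right_inj l₁).1 (by simpa using h)⟩

variable (f : α → ℤ)

theorem exists_eq_append_cons_of_prefix_sum_neg {l : List α}
    (h : ∃ q, q <+: l ∧ (q.map f).sum < 0) :
    ∃ m d r, l = m ++ d :: r ∧ (∀ q, q <+: m → 0 ≤ (q.map f).sum) ∧
      (m.map f).sum + f d < 0 := by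
  induction l using reverseRecOn with
  | nil => obtain ⟨q, hq, hneg⟩ := h; simp [prefix_nil.1 hq] at hneg
  | append_singleton l a ih =>
    by_cases hl : ∃ q, q <+: l ∧ (q.map f).sum < 0
    · obtain ⟨m, d, r, rfl, hm, hd⟩ := ih hl
      exact ⟨m, d, r ++ [a], by simp, hm, hd⟩
    · push Not at hl
      obtain ⟨q, hq, hneg⟩ := h
      rcases prefix_concat_iff.1 hq with rfl | hq
      · exact ⟨l, a, [], rfl, hl, by simpa using hneg⟩
      · exact absurd (hl q hq) (not_le.2 hneg)

theorem length_le_of_append_cons_eq_of_prefix_sum_neg {m₁ m₂ r₁ r₂ : List α} {d₁ d₂ : α}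
    (h : m₁ ++ d₁ :: r₁ = m₂ ++ d₂ :: r₂) (hd₁ : (m₁.map f).sum + f d₁ < 0)
    (hm₂ : ∀ q, q <+: m₂ → 0 ≤ (q.map f).sum) : m₂.length ≤ m₁.length := by
  by_contra! hlt
  have hpre : m₁ ++ [d₁] <+: m₂ := prefix_of_prefix_length_le
    ⟨r₁, by simp [h]⟩ (prefix_append m₂ (d₂ :: r₂)) (by simpa)
  have := hm₂ _ hpre
  simp only [map_append, map_cons, map_nil, sum_append, sum_cons, sum_nil, add_zero] at this
  omega

theorem eq_of_append_cons_eq_of_prefix_sum_neg {m₁ m₂ r₁ r₂ : List α} {d₁ d₂ : α}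
    (h : m₁ ++ d₁ :: r₁ = m₂ ++ d₂ :: r₂)
    (hm₁ : ∀ q, q <+: m₁ → 0 ≤ (q.map f).sum) (hd₁ : (m₁.map f).sum + f d₁ < 0)
    (hm₂ : ∀ q, q <+: m₂ → 0 ≤ (q.map f).sum) (hd₂ : (m₂.map f).sum + f d₂ < 0) :
    m₁ = m₂ ∧ d₁ = d₂ ∧ r₁ = r₂ := by
  have hlen := le_antisymm (length_le_of_append_cons_eq_of_prefix_sum_neg f h.symm hd₂ hm₁)
    (length_le_of_append_cons_eq_of_prefix_sum_neg f h hd₁ hm₂)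
  obtain ⟨rfl, hdr⟩ := append_inj h hlen
  simpa using hdr

end List

namespace S5

variable {s : ℤ × ℤ}

theorem one_le_fst (h : s ∈ S5) : 1 ≤ s.1 := by
  rcases h with rfl | rfl | ⟨r, hr, rfl⟩ <;> dsimp only <;> omega

theorem eq_down_of_snd_neg (h : s ∈ S5) (hs : s.2 < 0) : s = (1, -1) := by
  rcases h with rfl | rfl | ⟨r, -, rfl⟩ <;> simp_all

theorem two_dvd_fst_add_snd (h : s ∈ S5) : 2 ∣ s.1 + s.2 := by
  rcases h with rfl | rfl | ⟨r, -, rfl⟩ <;> simp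

theorem sum_fst_nonneg {p : List (ℤ × ℤ)} (h : ∀ s ∈ p, s ∈ S5) :
    0 ≤ (p.map Prod.fst).sum :=
  List.sum_nonneg fun x hx => by
    obtain ⟨s, hs, rfl⟩ := List.mem_map.1 hx
    linarith [one_le_fst (h s hs)]

end S5

theorem IsPath.unique {S : Set (ℤ × ℤ)} {n n' : ℕ} {p : List (ℤ × ℤ)}
    (h : IsPath S n p) (h' : IsPath S n' p) : n = n' := by
  have := h.2.1.symm.trans h'.2.1
  omega

theorem not_isPath_succ_nil {S : Set (ℤ × ℤ)} {n : ℕ} : ¬ IsPath S (n + 1) [] := fun h => by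
  have := h.2.1
  simp only [List.map_nil, List.sum_nil] at this
  omega

theorem isPath_S5_zero_iff {p : List (ℤ × ℤ)} : IsPath S5 0 p ↔ p = [] := by
  refine ⟨fun ⟨hS, hfst, _⟩ => ?_, ?_⟩
  · rcases p with _ | ⟨s, t⟩
    · rfl
    · have := S5.one_le_fst (hS s (by simp))
      have := S5.sum_fst_nonneg fun x hx => hS x (List.mem_cons_of_mem s hx)
      simp only [List.map_cons, List.sum_cons, CharP.cast_eq_zero, mul_zero] at hfst
      omega
  · rintro rfl
    exact ⟨by simp, by simp, by simp, fun q hq => by simp [List.prefix_nil.1 hq]⟩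

theorem exists_isPath_S5 {p : List (ℤ × ℤ)} (hS : ∀ s ∈ p, s ∈ S5)
    (hsnd : (p.map Prod.snd).sum = 0) (hpre : ∀ q, q <+: p → 0 ≤ (q.map Prod.snd).sum) :
    ∃ n, IsPath S5 n p := by
  have hdvd : (2 : ℤ) ∣ (p.map Prod.fst).sum := by
    have : (2 : ℤ) ∣ (p.map fun s => s.1 + s.2).sum :=
      List.dvd_sum fun x hx => by
        obtain ⟨s, hs, rfl⟩ := List.mem_map.1 hx
        exact S5.two_dvd_fst_add_snd (hS s hs)
    rwa [List.sum_map_add, hsnd, add_zero] at this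
  obtain ⟨c, hc⟩ := hdvd
  have := S5.sum_fst_nonneg hS
  exact ⟨c.toNat, hS, by omega, hsnd, hpre⟩

theorem IsPath.S5_head_cases {n : ℕ} {s : ℤ × ℤ} {t : List (ℤ × ℤ)}
    (h : IsPath S5 n (s :: t)) : s = (1, 1) ∨ ∃ r : ℤ, 0 < r ∧ s = (2 * r, 0) := by
  have hneg := h.2.2.2 [s] (by simp)
  rcases h.1 s (by simp) with rfl | rfl | h
  exacts [.inl rfl, absurd hneg (by simp), .inr h]

section UpDown

variable {m r : List (ℤ × ℤ)}

theorem forall_prefix_up_append_down_iff (hm : ∀ q, q <+: m → 0 ≤ (q.map Prod.snd).sum)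
    (hm0 : (m.map Prod.snd).sum = 0) :
    (∀ q, q <+: (1, 1) :: (m ++ (1, -1) :: r) → 0 ≤ (q.map Prod.snd).sum) ↔
      ∀ q, q <+: r → 0 ≤ (q.map Prod.snd).sum := by
  simp only [List.forall_prefix_cons_iff, List.forall_prefix_append_iff, List.map_cons,
    List.map_append, List.map_nil, List.sum_cons, List.sum_append, List.sum_nil, hm0,
    add_neg_cancel_left, zero_add]
  exact ⟨fun h => h.2.2.2, fun h => ⟨le_rfl, fun q hq => by linarith [hm q hq], zero_le_one, h⟩⟩

theorem IsPath.up_append_down {k j n : ℕ} (hkj : k + j = n) (hm : IsPath S5 k m)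
    (hr : IsPath S5 j r) : IsPath S5 (n + 1) ((1, 1) :: (m ++ (1, -1) :: r)) := by
  obtain ⟨hmS, hmfst, hmsnd, hmpre⟩ := hm
  obtain ⟨hrS, hrfst, hrsnd, hrpre⟩ := hr
  refine ⟨?_, ?_, ?_, (forall_prefix_up_append_down_iff hmpre hmsnd).2 hrpre⟩
  · simp only [List.mem_cons, List.mem_append]
    rintro s (rfl | hs | rfl | hs)
    exacts [.inl rfl, hmS s hs, .inr (.inl rfl), hrS s hs]
  · simp only [List.map_cons, List.map_append, List.sum_cons, List.sum_append, hmfst, hrfst,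
      ← hkj, Nat.cast_add, Nat.cast_one]
    ring
  · simp [hmsnd, hrsnd]

theorem IsPath.exists_of_head_up {n : ℕ} {t : List (ℤ × ℤ)}
    (h : IsPath S5 (n + 1) ((1, 1) :: t)) :
    ∃ k j m r, k + j = n ∧ t = m ++ (1, -1) :: r ∧ IsPath S5 k m ∧ IsPath S5 j r := by
  have ⟨hS, _, hsnd, hpre⟩ := h
  have ht : (t.map Prod.snd).sum = -1 := by
    simp only [List.map_cons, List.sum_cons] at hsnd
    omega
  obtain ⟨m, d, r, rfl, hm, hd⟩ :=
    List.exists_eq_append_cons_of_prefix_sum_neg Prod.snd ⟨t, List.prefix_refl t, by omega⟩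
  have hmS : ∀ s ∈ m, s ∈ S5 := fun s hs => hS s (by simp [hs])
  have hrS : ∀ s ∈ r, s ∈ S5 := fun s hs => hS s (by simp [hs])
  have hm0 := hm m (List.prefix_refl m)
  obtain rfl := S5.eq_down_of_snd_neg (hS d (by simp)) (by omega)
  replace hm0 : (m.map Prod.snd).sum = 0 := by
    simp only [Int.reduceNeg, add_neg_lt_iff_lt_add, zero_add] at hd
    omega
  have hr0 : (r.map Prod.snd).sum = 0 := by
    simpa [hm0] using ht
  obtain ⟨k, hk⟩ := exists_isPath_S5 hmS hm0 hm
  obtain ⟨j, hj⟩ := exists_isPath_S5 hrS hr0 ((forall_prefix_up_append_down_iff hm hm0).1 hpre)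
  exact ⟨k, j, m, r, by simpa using (hk.up_append_down rfl hj).unique h, rfl, hk, hj⟩

theorem up_append_down_inj {S : Set (ℤ × ℤ)} {k₁ k₂ : ℕ} {m₁ m₂ r₁ r₂ : List (ℤ × ℤ)}
    (hm₁ : IsPath S k₁ m₁) (hm₂ : IsPath S k₂ m₂)
    (h : (1, 1) :: (m₁ ++ (1, -1) :: r₁) = (1, 1) :: (m₂ ++ (1, -1) :: r₂)) :
    m₁ = m₂ ∧ r₁ = r₂ := by
  obtain ⟨hm, -, hr⟩ := List.eq_of_append_cons_eq_of_prefix_sum_neg Prod.snd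
    (List.cons_inj_right _ |>.1 h) hm₁.2.2.2 (by simp [hm₁.2.2.1])
    hm₂.2.2.2 (by simp [hm₂.2.2.1])
  exact ⟨hm, hr⟩

end UpDown

section NoFlatOnAxis

theorem noFlatOnAxis_nil : NoFlatOnAxis [] := fun q s h => by simpa using h.length_le

theorem not_noFlatOnAxis_cons {s : ℤ × ℤ} {t : List (ℤ × ℤ)} (hs : s.2 = 0) :
    ¬ NoFlatOnAxis (s :: t) :=
  fun h => h [] s (by simp) hs rfl

theorem noFlatOnAxis_append_iff {a b : List (ℤ × ℤ)} (ha : NoFlatOnAxis a)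
    (ha0 : (a.map Prod.snd).sum = 0) : NoFlatOnAxis (a ++ b) ↔ NoFlatOnAxis b := by
  refine ⟨fun h q s hq hs => ?_, fun hb q s hq hs => ?_⟩
  · simpa [ha0] using h (a ++ q) s (by simpa using hq) hs
  · rcases List.concat_prefix_append hq with hq | ⟨t, rfl, ht⟩
    · exact ha q s hq hs
    · simpa [ha0] using hb t s ht hs

theorem noFlatOnAxis_up_append_down {m : List (ℤ × ℤ)}
    (hm : ∀ q, q <+: m → 0 ≤ (q.map Prod.snd).sum) :
    NoFlatOnAxis ((1, 1) :: (m ++ [(1, -1)])) := by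
  intro q s hq hs
  rw [← List.cons_append, List.prefix_concat_iff] at hq
  rcases hq with hq | hq
  · obtain rfl : s = (1, -1) := by simpa using (List.append_inj' hq rfl).2
    simp at hs
  rcases q with _ | ⟨x, q⟩
  · obtain rfl : s = (1, 1) := by simpa using hq
    simp at hs
  · rw [List.cons_append, List.cons_prefix_cons] at hq
    obtain ⟨rfl, hq⟩ := hq
    have := hm q (List.prefix_append q [s] |>.trans hq)
    simp only [List.map_cons, List.sum_cons, ne_eq]
    omega

theorem noFlatOnAxis_up_append_down_append_iff {m r : List (ℤ × ℤ)}
    (hm : ∀ q, q <+: m → 0 ≤ (q.map Prod.snd).sum) (hm0 : (m.map Prod.snd).sum = 0) :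
    NoFlatOnAxis ((1, 1) :: (m ++ (1, -1) :: r)) ↔ NoFlatOnAxis r := by
  simpa using noFlatOnAxis_append_iff (b := r) (noFlatOnAxis_up_append_down hm) (by simp [hm0])

end NoFlatOnAxis

section Flat

variable {t : List (ℤ × ℤ)}

theorem forall_prefix_cons_flat_iff {s : ℤ × ℤ} (hs : s.2 = 0) :
    (∀ q, q <+: s :: t → 0 ≤ (q.map Prod.snd).sum) ↔
      ∀ q, q <+: t → 0 ≤ (q.map Prod.snd).sum := by
  simp [List.forall_prefix_cons_iff, hs]

theorem IsPath.flat_cons {i j n : ℕ} (hij : i + j = n) (h : IsPath S5 j t) :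
    IsPath S5 (n + 1) ((2 * ((i : ℤ) + 1), 0) :: t) := by
  obtain ⟨hS, hfst, hsnd, hpre⟩ := h
  refine ⟨?_, ?_, by simpa using hsnd, (forall_prefix_cons_flat_iff rfl).2 hpre⟩
  · simp only [List.mem_cons, forall_eq_or_imp]
    exact ⟨.inr (.inr ⟨i + 1, by omega, rfl⟩), hS⟩
  · simp only [List.map_cons, List.sum_cons, hfst, ← hij, Nat.cast_add, Nat.cast_one]
    ring

theorem IsPath.exists_of_head_flat {n : ℕ} {r : ℤ} (h : IsPath S5 (n + 1) ((2 * r, 0) :: t)) :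
    ∃ i j, i + j = n ∧ r = i + 1 ∧ IsPath S5 j t := by
  obtain ⟨hS, hfst, hsnd, hpre⟩ := h
  obtain ⟨j, hj⟩ := exists_isPath_S5 (fun s hs => hS s (by simp [hs])) (by simpa using hsnd)
    ((forall_prefix_cons_flat_iff rfl).1 hpre)
  have hr : 1 ≤ 2 * r := S5.one_le_fst (hS (2 * r, 0) (by simp))
  simp only [List.map_cons, List.sum_cons, hj.2.1, Nat.cast_add, Nat.cast_one] at hfst
  exact ⟨n - j, j, by omega, by omega, hj⟩

end Flat

abbrev LS5 (n : ℕ) : Type := {p : List (ℤ × ℤ) // IsPath S5 n p}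

abbrev AS5 (n : ℕ) : Type := {p : List (ℤ × ℤ) // IsPath S5 n p ∧ NoFlatOnAxis p}

section Decomposition

open Finset.HasAntidiagonal

variable (n : ℕ)

def joinFlat (x : (ij : antidiagonal n) × LS5 ij.1.2) : LS5 (n + 1) :=
  ⟨(2 * ((x.1.1.1 : ℤ) + 1), 0) :: x.2.1, x.2.2.flat_cons (mem_antidiagonal.1 x.1.2)⟩

def joinUpDown (x : (ij : antidiagonal n) × LS5 ij.1.1 × LS5 ij.1.2) : LS5 (n + 1) :=
  ⟨(1, 1) :: (x.2.1.1 ++ (1, -1) :: x.2.2.1),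
    x.2.1.2.up_append_down (mem_antidiagonal.1 x.1.2) x.2.2.2⟩

def joinUpDownA (x : (ij : antidiagonal n) × LS5 ij.1.1 × AS5 ij.1.2) : AS5 (n + 1) :=
  ⟨(1, 1) :: (x.2.1.1 ++ (1, -1) :: x.2.2.1),
    x.2.1.2.up_append_down (mem_antidiagonal.1 x.1.2) x.2.2.2.1,
    (noFlatOnAxis_up_append_down_append_iff x.2.1.2.2.2.2 x.2.1.2.2.2.1).2 x.2.2.2.2⟩

variable {n}

theorem eq_of_up_append_down_eq (Q : ℕ → List (ℤ × ℤ) → Prop)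
    {x y : (ij : antidiagonal n) × LS5 ij.1.1 × {r // Q ij.1.2 r}}
    (h : (1, 1) :: (x.2.1.1 ++ (1, -1) :: x.2.2.1) =
      (1, 1) :: (y.2.1.1 ++ (1, -1) :: y.2.2.1)) :
    x = y := by
  rcases x with ⟨⟨⟨i₁, j₁⟩, h₁⟩, ⟨m₁, hm₁⟩, ⟨r₁, hr₁⟩⟩
  rcases y with ⟨⟨⟨i₂, j₂⟩, h₂⟩, ⟨m₂, hm₂⟩, ⟨r₂, hr₂⟩⟩
  have : i₁ + j₁ = n := mem_antidiagonal.1 h₁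
  have : i₂ + j₂ = n := mem_antidiagonal.1 h₂
  obtain ⟨rfl, rfl⟩ := up_append_down_inj hm₁ hm₂ h
  obtain rfl : i₁ = i₂ := hm₁.unique hm₂
  obtain rfl : j₁ = j₂ := by omega
  rfl

theorem joinFlat_injective : Function.Injective (joinFlat n) := by
  rintro ⟨⟨⟨i₁, j₁⟩, h₁⟩, ⟨t₁, ht₁⟩⟩ ⟨⟨⟨i₂, j₂⟩, h₂⟩, ⟨t₂, ht₂⟩⟩ h
  have : i₁ + j₁ = n := mem_antidiagonal.1 h₁
  have : i₂ + j₂ = n := mem_antidiagonal.1 h₂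
  obtain ⟨rfl, rfl⟩ : i₁ = i₂ ∧ t₁ = t₂ := by simpa [joinFlat] using h
  obtain rfl : j₁ = j₂ := by omega
  rfl

theorem joinFlat_joinUpDown_bijective :
    Function.Bijective (Sum.elim (joinFlat n) (joinUpDown n)) := by
  refine ⟨joinFlat_injective.sumElim
    (fun x y h => eq_of_up_append_down_eq (IsPath S5) (congrArg Subtype.val h))
    (fun x y h => by simp [joinFlat, joinUpDown] at h), ?_⟩
  rintro ⟨_ | ⟨s, t⟩, hp⟩
  · exact absurd hp not_isPath_succ_nil
  rcases hp.S5_head_cases with rfl | ⟨r, -, rfl⟩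
  · obtain ⟨k, j, m, r, hkj, rfl, hm, hr⟩ := hp.exists_of_head_up
    exact ⟨.inr ⟨⟨(k, j), mem_antidiagonal.2 hkj⟩, ⟨m, hm⟩, ⟨r, hr⟩⟩, rfl⟩
  · obtain ⟨i, j, hij, rfl, ht⟩ := hp.exists_of_head_flat
    exact ⟨.inl ⟨⟨(i, j), mem_antidiagonal.2 hij⟩, ⟨t, ht⟩⟩, rfl⟩

theorem joinUpDownA_bijective : Function.Bijective (joinUpDownA n) := by
  refine ⟨fun x y h => eq_of_up_append_down_eq (fun j r => IsPath S5 j r ∧ NoFlatOnAxis r)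
    (congrArg Subtype.val h), ?_⟩
  rintro ⟨_ | ⟨s, t⟩, hp, hf⟩
  · exact absurd hp not_isPath_succ_nil
  rcases hp.S5_head_cases with rfl | ⟨r, -, rfl⟩
  · obtain ⟨k, j, m, r, hkj, rfl, hm, hr⟩ := hp.exists_of_head_up
    have hfr := (noFlatOnAxis_up_append_down_append_iff hm.2.2.2 hm.2.2.1).1 hf
    exact ⟨⟨⟨(k, j), mem_antidiagonal.2 hkj⟩, ⟨m, hm⟩, ⟨r, hr, hfr⟩⟩, rfl⟩
  · exact absurd hf (not_noFlatOnAxis_cons rfl)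

end Decomposition

section Counting

open Finset.HasAntidiagonal

instance LS5.finite (n : ℕ) : Finite (LS5 n) := by
  induction n using Nat.strong_induction_on with
  | _ n ih =>
  rcases n with _ | n
  · have : Subsingleton (LS5 0) := ⟨fun p q => Subtype.ext <|
      (isPath_S5_zero_iff.1 p.2).trans (isPath_S5_zero_iff.1 q.2).symm⟩
    infer_instance
  · have (ij : antidiagonal n) : Finite (LS5 ij.1.1) := ih _ (by
      have := mem_antidiagonal.1 ij.2; omega)
    have (ij : antidiagonal n) : Finite (LS5 ij.1.2) := ih _ (by
      have := mem_antidiagonal.1 ij.2; omega)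
    exact Finite.of_surjective _ joinFlat_joinUpDown_bijective.2

instance AS5.finite (n : ℕ) : Finite (AS5 n) :=
  Finite.of_injective (fun p : AS5 n => (⟨p.1, p.2.1⟩ : LS5 n))
    fun _ _ h => Subtype.ext (congrArg (fun p : LS5 n => p.1) h)

theorem LS5.card_zero : Nat.card (LS5 0) = 1 :=
  Nat.card_eq_one_iff_exists.2 ⟨⟨[], isPath_S5_zero_iff.2 rfl⟩,
    fun p => Subtype.ext (isPath_S5_zero_iff.1 p.2)⟩

theorem AS5.card_zero : Nat.card (AS5 0) = 1 :=
  Nat.card_eq_one_iff_exists.2 ⟨⟨[], isPath_S5_zero_iff.2 rfl, noFlatOnAxis_nil⟩,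
    fun p => Subtype.ext (isPath_S5_zero_iff.1 p.2.1)⟩

theorem LS5.card_succ (n : ℕ) :
    Nat.card (LS5 (n + 1)) = ∑ ij ∈ antidiagonal n, Nat.card (LS5 ij.2) +
      ∑ ij ∈ antidiagonal n, Nat.card (LS5 ij.1) * Nat.card (LS5 ij.2) := by
  rw [← Nat.card_eq_of_bijective _ joinFlat_joinUpDown_bijective, Nat.card_sum,
    Nat.card_sigma, Nat.card_sigma,
    Finset.sum_coe_sort (antidiagonal n) fun ij => Nat.card (LS5 ij.2),
    ← Finset.sum_coe_sort (antidiagonal n) fun ij => Nat.card (LS5 ij.1) * Nat.card (LS5 ij.2)]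
  simp only [Nat.card_prod]

theorem AS5.card_succ (n : ℕ) :
    Nat.card (AS5 (n + 1)) =
      ∑ ij ∈ antidiagonal n, Nat.card (LS5 ij.1) * Nat.card (AS5 ij.2) := by
  rw [← Nat.card_eq_of_bijective _ joinUpDownA_bijective, Nat.card_sigma,
    ← Finset.sum_coe_sort (antidiagonal n) fun ij => Nat.card (LS5 ij.1) * Nat.card (AS5 ij.2)]
  simp only [Nat.card_prod]

end Counting

namespace PowerSeries

theorem eq_of_sq_eq_sq_of_constantCoeff_eq_one {R : Type*} [CommRing R] [IsDomain R]
    [NeZero (2 : R)] {a b : R⟦X⟧} (h : a ^ 2 = b ^ 2) (ha : constantCoeff a = 1)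
    (hb : constantCoeff b = 1) : a = b := by
  refine (sq_eq_sq_iff_eq_or_eq_neg.1 h).resolve_right fun hab => two_ne_zero (α := R) ?_
  have := congrArg constantCoeff hab
  rw [map_neg, ha, hb] at this
  linear_combination this

end PowerSeries

section Series

open PowerSeries

variable (R : Type*) [CommSemiring R]

noncomputable def LS5.series : R⟦X⟧ := mk fun n => (Nat.card (LS5 n) : R)

noncomputable def AS5.series : R⟦X⟧ := mk fun n => (Nat.card (AS5 n) : R)

theorem AS5.series_eq : AS5.series R = 1 + X * (LS5.series R * AS5.series R) := by
  ext (_ | n)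
  · simp [AS5.series, AS5.card_zero]
  · rw [map_add, coeff_succ_X_mul, coeff_mul]
    simp [AS5.series, LS5.series, AS5.card_succ]

theorem LS5.series_eq :
    LS5.series R = 1 + X * (mk 1 * LS5.series R + LS5.series R * LS5.series R) := by
  ext (_ | n)
  · simp [LS5.series, LS5.card_zero]
  · rw [map_add, coeff_succ_X_mul, map_add, coeff_mul, coeff_mul]
    simp [LS5.series, LS5.card_succ]

end Series

open PowerSeries in
theorem AS5.series_eq_quadratic (R : Type*) [CommRing R] :
    AS5.series R = 1 - X + X * (2 - X) * AS5.series R ^ 2 := by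
  -- multiply the equation for `L` by `(1 - X) X Q²`, then substitute `X L Q = Q - 1`
  linear_combination (X * AS5.series R ^ 2 * (1 - X)) * LS5.series_eq R +
    (X ^ 2 * AS5.series R ^ 2 * LS5.series R) * mk_one_mul_one_sub_eq_one R +
    ((1 - 2 * X) * AS5.series R -
      (1 - X) * (X * LS5.series R * AS5.series R + AS5.series R - 1)) * AS5.series_eq R

theorem gf_A_S5 (P s : PowerSeries ℚ)
    (hP : ∀ n : ℕ, PowerSeries.coeff n P =
      if n = 0 then 1
      else (Nat.card {p : List (ℤ × ℤ) // IsPath S5 n p ∧ NoFlatOnAxis p} : ℚ))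
    (hs0 : PowerSeries.constantCoeff s = 1)
    (hs2 : s ^ 2 = 1 - 8 * PowerSeries.X + 12 * PowerSeries.X ^ 2 - 4 * PowerSeries.X ^ 3) :
    2 * PowerSeries.X * (PowerSeries.X - 2) * P = -1 + s := by
  open PowerSeries in
  have hPA : P = AS5.series ℚ := by
    ext n
    rw [hP, AS5.series, coeff_mk]
    split_ifs with hn
    · simp [hn, AS5.card_zero]
    · rfl
  have hsq : (1 + 2 * X * (X - 2) * P) ^ 2 = s ^ 2 := by
    rw [hs2, hPA]
    linear_combination 4 * X * (X - 2) * AS5.series_eq_quadratic ℚ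
  have := eq_of_sq_eq_sq_of_constantCoeff_eq_one hsq (by simp) hs0
  linear_combination this
end

section
/- For n≥1 let a(n) denote the number of pairs (P, c) where P is a Schröder path of order n and c is a coloring of the horizontal runs of P with one of three given colors (i.e. a(n) = Σ_{P Schröder path of order n} 3^{hr(P)}). Then the formal power series F(x) = 1 + Σ_{n≥1} a(n) xⁿ over ℚ satisfies 2x(2x−1)·F(x) = 3x − 1 + √(1−10x+25x²−16x³), where the square root denotes the unique formal power series with constant term 1 whose square is 1−10x+25x²−16x³. -/
/-- The number of pairs `(P, c)` where `P` is a Schröder path of order `n` and `c`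
is a coloring of the horizontal runs of `P` with one of three colors,
i.e. `a(n) = Σ_P 3^{hr(P)}`. -/
noncomputable def aCount (n : ℕ) : ℕ :=
  Nat.card ((P : {p : List (ℤ × ℤ) // IsPath S3 n p}) × (Fin (hr P.val) → Fin 3))

/-!
A nonempty Schröder path starts either with `H` or with `U`; in the latter case it splits
uniquely at its first return to the axis as `U A D B` with `A`, `B` Schröder paths, and
`hr (U A D B) = hr A + hr B`. Prepending `H` to a path multiplies its weight `3 ^ hr` by `3`
exactly when the path already starts with `H`. So, with `G` the weighted count of the paths
starting with `H`, we get `F = 1 + x F² + G` and `G = x F + 2 x G`. Eliminating `G` shows that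
`2x(2x − 1) F − 3x + 1` squares to `1 − 10x + 25x² − 16x³`; its constant term is `1`, so it
is the given square root.
-/

namespace Schroder

open Finset PowerSeries

def up : ℤ × ℤ := (1, 1)
def down : ℤ × ℤ := (1, -1)
def flat : ℤ × ℤ := (2, 0)

lemma mem_S3 {s : ℤ × ℤ} : s ∈ S3 ↔ s = up ∨ s = down ∨ s = flat := by
  simp [S3, up, down, flat]

lemma fst_pos_of_mem_S3 {s : ℤ × ℤ} (hs : s ∈ S3) : 0 < s.1 := by
  rcases mem_S3.1 hs with rfl | rfl | rfl <;> decide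

def height (p : List (ℤ × ℤ)) : ℤ := (p.map Prod.snd).sum

def width (p : List (ℤ × ℤ)) : ℤ := (p.map Prod.fst).sum

@[simp] lemma height_nil : height [] = 0 := rfl
@[simp] lemma width_nil : width [] = 0 := rfl

@[simp] lemma height_cons (s : ℤ × ℤ) (p : List (ℤ × ℤ)) : height (s :: p) = s.2 + height p := by
  simp [height]

@[simp] lemma width_cons (s : ℤ × ℤ) (p : List (ℤ × ℤ)) : width (s :: p) = s.1 + width p := by
  simp [width]

@[simp] lemma height_append (p q : List (ℤ × ℤ)) : height (p ++ q) = height p + height q := by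
  simp [height]

@[simp] lemma width_append (p q : List (ℤ × ℤ)) : width (p ++ q) = width p + width q := by
  simp [width]

lemma isPath_iff {S : Set (ℤ × ℤ)} {n : ℕ} {p : List (ℤ × ℤ)} :
    IsPath S n p ↔
      (∀ s ∈ p, s ∈ S) ∧ width p = 2 * n ∧ height p = 0 ∧ ∀ q, q <+: p → 0 ≤ height q :=
  Iff.rfl

lemma length_le_width {p : List (ℤ × ℤ)} (hp : ∀ s ∈ p, 0 < s.1) : (p.length : ℤ) ≤ width p := by
  induction p with
  | nil => simp
  | cons s p ih =>
    have := ih fun x hx => hp x (List.mem_cons_of_mem s hx)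
    have := hp s List.mem_cons_self
    simp only [List.length_cons, width_cons]
    omega

lemma finite_setOf_isPath {S : Set (ℤ × ℤ)} (hS : S.Finite) (hpos : ∀ s ∈ S, 0 < s.1) (n : ℕ) :
    {p | IsPath S n p}.Finite := by
  have : Finite S := hS.to_subtype
  refine ((List.finite_length_le S (2 * n)).image (List.map Subtype.val)).subset ?_
  intro p hp
  obtain ⟨hmem, hwidth, -⟩ := isPath_iff.1 hp
  refine ⟨p.attachWith (· ∈ S) hmem, ?_, List.attachWith_map_subtype_val hmem⟩
  have := length_le_width fun s hs => hpos s (hmem s hs)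
  simp only [Set.mem_ofPred_eq, List.length_attachWith]
  omega

lemma finite_setOf_isPath_S3 (n : ℕ) : {p | IsPath S3 n p}.Finite :=
  finite_setOf_isPath (by simp [S3]) (fun _ => fst_pos_of_mem_S3) n

noncomputable def paths (n : ℕ) : Finset (List (ℤ × ℤ)) := (finite_setOf_isPath_S3 n).toFinset

@[simp] lemma mem_paths {n : ℕ} {p : List (ℤ × ℤ)} : p ∈ paths n ↔ IsPath S3 n p :=
  Set.Finite.mem_toFinset _

lemma aCount_eq_sum (n : ℕ) : aCount n = ∑ p ∈ paths n, 3 ^ hr p := by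
  have e : ((P : {p // IsPath S3 n p}) × (Fin (hr P.val) → Fin 3)) ≃
      ((P : {p // p ∈ paths n}) × (Fin (hr P.val) → Fin 3)) :=
    Equiv.sigmaCongrLeft' (Equiv.subtypeEquivRight fun _ => mem_paths.symm)
  rw [aCount, Nat.card_congr e, Nat.card_eq_fintype_card, Fintype.card_sigma,
    ← Finset.sum_coe_sort (paths n)]
  simp

lemma paths_zero : paths 0 = {[]} := by
  ext p
  simp only [mem_paths, Finset.mem_singleton]
  constructor
  · intro hp
    obtain ⟨hmem, hwidth, -⟩ := isPath_iff.1 hp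
    have := length_le_width fun s hs => fst_pos_of_mem_S3 (hmem s hs)
    exact List.eq_nil_of_length_eq_zero (by omega)
  · rintro rfl
    exact ⟨by simp, by simp, by simp, fun q hq => by simp [List.prefix_nil.1 hq]⟩

lemma aCount_zero : aCount 0 = 1 := by
  simp [aCount_eq_sum, paths_zero, hr]

lemma hr_cons_cons (x y : ℤ × ℤ) (p : List (ℤ × ℤ)) :
    hr (x :: y :: p) = hr (y :: p) + if x = y ∧ x.2 = 0 then 1 else 0 := by
  simp [hr, List.countP_cons]

lemma hr_cons_of_snd_ne_zero {x : ℤ × ℤ} (hx : x.2 ≠ 0) (p : List (ℤ × ℤ)) :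
    hr (x :: p) = hr p := by
  cases p with
  | nil => rfl
  | cons y p => simp [hr_cons_cons, hx]

lemma hr_append_cons_of_snd_ne_zero (p : List (ℤ × ℤ)) {y : ℤ × ℤ} (hy : y.2 ≠ 0)
    (q : List (ℤ × ℤ)) : hr (p ++ y :: q) = hr p + hr (y :: q) := by
  induction p with
  | nil => simp [hr]
  | cons x p ih =>
    cases p with
    | nil =>
      simp only [List.cons_append, List.nil_append, hr_cons_cons]
      simp [hr, show ¬(x = y ∧ x.2 = 0) from fun h => hy (h.1 ▸ h.2)]
    | cons x' p => simp only [List.cons_append] at ih ⊢; rw [hr_cons_cons, ih, hr_cons_cons]; ring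

lemma hr_up_cons_append_down_cons (p q : List (ℤ × ℤ)) :
    hr (up :: (p ++ down :: q)) = hr p + hr q := by
  have hup : up.2 ≠ 0 := by decide
  have hdown : down.2 ≠ 0 := by decide
  rw [hr_cons_of_snd_ne_zero hup, hr_append_cons_of_snd_ne_zero p hdown,
    hr_cons_of_snd_ne_zero hdown]

lemma hr_flat_cons (p : List (ℤ × ℤ)) :
    hr (flat :: p) = hr p + if p.head? = some flat then 1 else 0 := by
  cases p with
  | nil => rfl
  | cons y p => simp [hr_cons_cons, flat, eq_comm]

lemma _root_.List.prefix_or_eq_append_of_prefix_append {α : Type*} {q l₁ l₂ : List α}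
    (h : q <+: l₁ ++ l₂) :
    q <+: l₁ ∨ ∃ r, r <+: l₂ ∧ q = l₁ ++ r := by
  induction l₁ generalizing q with
  | nil => exact .inr ⟨q, h, rfl⟩
  | cons a l₁ ih =>
    rcases List.prefix_cons_iff.1 h with rfl | ⟨t, rfl, ht⟩
    · exact .inl List.nil_prefix
    · rcases ih ht with h | ⟨r, hr, rfl⟩
      · exact .inl (List.cons_prefix_cons.2 ⟨rfl, h⟩)
      · exact .inr ⟨r, hr, rfl⟩

lemma forall_prefix_cons_iff {α : Type*} {x : α} {p : List α} {P : List α → Prop} :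
    (∀ q, q <+: x :: p → P q) ↔ P [] ∧ ∀ q, q <+: p → P (x :: q) := by
  simp only [List.prefix_cons_iff, or_imp, forall_and, forall_eq, exists_imp, and_imp]
  exact and_congr_right' ⟨fun h q hq => h _ q rfl hq, fun h _ q hr hq => hr ▸ h q hq⟩

lemma isPath_flat_cons_iff {n : ℕ} {p : List (ℤ × ℤ)} :
    IsPath S3 (n + 1) (flat :: p) ↔ IsPath S3 n p := by
  simp only [isPath_iff, List.forall_mem_cons, forall_prefix_cons_iff, width_cons, height_cons,
    height_nil, le_refl, true_and, flat]
  have : ((2, 0) : ℤ × ℤ) ∈ S3 := by simp [S3]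
  simp only [this, true_and, zero_add]
  push_cast
  constructor <;> rintro ⟨hmem, hwidth, hrest⟩ <;> exact ⟨hmem, by omega, hrest⟩

lemma isPath_up_cons_append_down_cons {i j : ℕ} {p q : List (ℤ × ℤ)}
    (hp : IsPath S3 i p) (hq : IsPath S3 j q) :
    IsPath S3 (i + j + 1) (up :: (p ++ down :: q)) := by
  obtain ⟨hpm, hpw, hph, hpn⟩ := isPath_iff.1 hp
  obtain ⟨hqm, hqw, hqh, hqn⟩ := isPath_iff.1 hq
  refine isPath_iff.2 ⟨?_, ?_, ?_, ?_⟩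
  · simp only [List.mem_cons, List.mem_append]
    rintro s (rfl | hs | rfl | hs)
    exacts [by simp [S3, up], hpm s hs, by simp [S3, down], hqm s hs]
  · simp [up, down, hpw, hqw]; ring
  · simp [up, down, hph, hqh]
  · refine forall_prefix_cons_iff.2 ⟨by simp, fun r hr => ?_⟩
    rcases List.prefix_or_eq_append_of_prefix_append hr with hrp | ⟨r, hrq, rfl⟩
    · simpa [up] using (hpn r hrp).trans (by omega)
    rcases List.prefix_cons_iff.1 hrq with rfl | ⟨r, rfl, hrq'⟩
    · simp [up, hph]
    · simpa [up, down, hph] using hqn r hrq'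

lemma snd_ge_neg_one_of_mem_S3 {s : ℤ × ℤ} (hs : s ∈ S3) : -1 ≤ s.2 ∧ (s.2 = -1 → s = down) := by
  rcases mem_S3.1 hs with rfl | rfl | rfl <;> decide

lemma exists_first_return {t : List (ℤ × ℤ)} (ht : ∀ s ∈ t, s ∈ S3) {c : ℤ} (hc : 0 ≤ c)
    (hneg : c + height t < 0) :
    ∃ p q, t = p ++ down :: q ∧ c + height p = 0 ∧ ∀ r, r <+: p → 0 ≤ c + height r := by
  induction t generalizing c with
  | nil => simp at hneg; omega
  | cons s t ih =>
    rw [List.forall_mem_cons] at ht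
    by_cases hstop : s = down ∧ c = 0
    · obtain ⟨rfl, rfl⟩ := hstop
      exact ⟨[], t, rfl, by simp, fun r hr => by simp [List.prefix_nil.1 hr]⟩
    have hs := snd_ge_neg_one_of_mem_S3 ht.1
    have hc' : 0 ≤ c + s.2 := by
      by_contra
      exact hstop ⟨hs.2 (by omega), by omega⟩
    obtain ⟨p, q, rfl, hp, hpre⟩ := ih ht.2 hc' (by simp at hneg; omega)
    refine ⟨s :: p, q, rfl, by simp; omega, forall_prefix_cons_iff.2 ⟨by simpa, fun r hr => ?_⟩⟩
    simpa [add_assoc] using hpre r hr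

lemma eq_of_append_down_cons_eq {p p' q q' : List (ℤ × ℤ)} (hp : height p = 0)
    (hp' : height p' = 0) (hpre : ∀ r, r <+: p → 0 ≤ height r)
    (hpre' : ∀ r, r <+: p' → 0 ≤ height r) (h : p ++ down :: q = p' ++ down :: q') :
    p = p' ∧ q = q' := by
  suffices hpp : p = p' by subst hpp; simpa using h
  wlog hle : p.length ≤ p'.length generalizing p p' q q'
  · exact (this hp' hp hpre' hpre h.symm (by omega)).symm
  have hpref : p <+: p' := (List.isPrefix_append_of_length hle).1 (h ▸ List.prefix_append _ _)
  refine hpref.eq_of_length (le_antisymm hle (not_lt.1 fun hlt => ?_))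
  have : p ++ [down] <+: p' := by
    refine (List.isPrefix_append_of_length (l₃ := down :: q') (by simpa using hlt)).1 ?_
    exact h ▸ ⟨q, by simp⟩
  simpa [down, hp] using hpre' _ this

lemma even_width_add_height {p : List (ℤ × ℤ)} (hp : ∀ s ∈ p, s ∈ S3) :
    Even (width p + height p) := by
  induction p with
  | nil => simp
  | cons s p ih =>
    rw [List.forall_mem_cons] at hp
    have : width (s :: p) + height (s :: p) = (s.1 + s.2) + (width p + height p) := by simp; ring
    rw [this]
    refine Even.add ?_ (ih hp.2)
    rcases mem_S3.1 hp.1 with rfl | rfl | rfl <;> decide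

lemma exists_isPath_of_height_eq_zero {p : List (ℤ × ℤ)} (hmem : ∀ s ∈ p, s ∈ S3)
    (hp : height p = 0) (hpre : ∀ r, r <+: p → 0 ≤ height r) : ∃ n : ℕ, IsPath S3 n p := by
  obtain ⟨k, hk⟩ := even_width_add_height hmem
  have := length_le_width fun s hs => fst_pos_of_mem_S3 (hmem s hs)
  exact ⟨k.toNat, isPath_iff.2 ⟨hmem, by omega, hp, hpre⟩⟩

lemma head?_eq_up_or_flat {n : ℕ} {p : List (ℤ × ℤ)} (hp : IsPath S3 (n + 1) p) :
    p.head? = some up ∨ p.head? = some flat := by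
  obtain ⟨hmem, hwidth, -, hpre⟩ := isPath_iff.1 hp
  cases p with
  | nil => simp at hwidth; omega
  | cons s p =>
    rcases mem_S3.1 (hmem s List.mem_cons_self) with rfl | rfl | rfl
    · simp
    · simpa [down] using hpre [down] (by simp)
    · simp

lemma exists_decomposition {n : ℕ} {t : List (ℤ × ℤ)} (h : IsPath S3 (n + 1) (up :: t)) :
    ∃ i j p q, i + j = n ∧ IsPath S3 i p ∧ IsPath S3 j q ∧ t = p ++ down :: q := by
  obtain ⟨hmem, hwidth, hheight, hpre⟩ := isPath_iff.1 h
  rw [List.forall_mem_cons] at hmem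
  rw [forall_prefix_cons_iff] at hpre
  simp only [height_cons, width_cons, up] at hheight hpre hwidth
  obtain ⟨p, q, rfl, hp, hppre⟩ := exists_first_return hmem.2 le_rfl (by omega)
  simp only [zero_add] at hp hppre
  have hmem' := List.forall_mem_append.1 hmem.2
  obtain ⟨i, hi⟩ := exists_isPath_of_height_eq_zero hmem'.1 hp hppre
  obtain ⟨j, hj⟩ := exists_isPath_of_height_eq_zero (List.forall_mem_cons.1 hmem'.2).2
    (by simp [down, hp] at hheight; omega) fun r hr => by
      simpa [down, hp] using hpre.2 (p ++ down :: r) (by simpa using hr)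
  refine ⟨i, j, p, q, ?_, hi, hj, rfl⟩
  have := (isPath_iff.1 hi).2.1
  have := (isPath_iff.1 hj).2.1
  simp [down] at hwidth
  omega

noncomputable def flatCount (n : ℕ) : ℕ := ∑ p ∈ paths n with p.head? = some flat, 3 ^ hr p

lemma flatCount_zero : flatCount 0 = 0 := by
  simp [flatCount, paths_zero]

lemma filter_paths_succ_head?_eq_flat (n : ℕ) :
    {p ∈ paths (n + 1) | p.head? = some flat} = (paths n).image (flat :: ·) := by
  ext p
  simp only [mem_filter, mem_paths, mem_image]
  constructor
  · rintro ⟨hp, hhead⟩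
    obtain ⟨t, rfl⟩ := List.head?_eq_some_iff.1 hhead
    exact ⟨t, isPath_flat_cons_iff.1 hp, rfl⟩
  · rintro ⟨t, ht, rfl⟩
    exact ⟨isPath_flat_cons_iff.2 ht, rfl⟩

lemma flatCount_succ (n : ℕ) : flatCount (n + 1) = aCount n + 2 * flatCount n := by
  rw [flatCount, filter_paths_succ_head?_eq_flat, sum_image fun _ _ _ _ h => List.cons_injective h,
    aCount_eq_sum, flatCount, sum_filter, mul_sum, ← sum_add_distrib]
  refine sum_congr rfl fun t _ => ?_
  rw [hr_flat_cons]
  split_ifs <;> ring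

lemma sum_paths_succ_head?_eq_up (n : ℕ) :
    ∑ p ∈ paths (n + 1) with p.head? = some up, 3 ^ hr p =
      ∑ ij ∈ antidiagonal n, aCount ij.1 * aCount ij.2 := by
  simp_rw [aCount_eq_sum, sum_mul_sum, ← sum_product', ← pow_add]
  rw [sum_sigma']
  refine (sum_bij (fun x _ => up :: (x.2.1 ++ down :: x.2.2)) ?_ ?_ ?_ ?_).symm
  · rintro ⟨⟨i, j⟩, p, q⟩ hx
    simp only [mem_sigma, HasAntidiagonal.mem_antidiagonal, mem_product, mem_paths] at hx
    obtain ⟨rfl, hp, hq⟩ := hx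
    simpa using isPath_up_cons_append_down_cons hp hq
  · rintro ⟨⟨i, j⟩, p, q⟩ hx ⟨⟨i', j'⟩, p', q'⟩ hx' h
    simp only [mem_sigma, HasAntidiagonal.mem_antidiagonal, mem_product, mem_paths] at hx hx'
    obtain ⟨hij, hp, hq⟩ := hx
    obtain ⟨hij', hp', hq'⟩ := hx'
    obtain ⟨rfl, rfl⟩ := eq_of_append_down_cons_eq hp.2.2.1 hp'.2.2.1 hp.2.2.2 hp'.2.2.2
      (List.cons_injective h)
    obtain rfl : i = i' := by have := hp.2.1; have := hp'.2.1; omega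
    obtain rfl : j = j' := by omega
    rfl
  · intro p hp
    simp only [mem_filter, mem_paths] at hp
    obtain ⟨hpath, hhead⟩ := hp
    obtain ⟨t, rfl⟩ := List.head?_eq_some_iff.1 hhead
    obtain ⟨i, j, p, q, hij, hp, hq, rfl⟩ := exists_decomposition hpath
    exact ⟨⟨(i, j), p, q⟩, by simp [hij, hp, hq], rfl⟩
  · rintro ⟨⟨i, j⟩, p, q⟩ -
    rw [hr_up_cons_append_down_cons]

lemma aCount_succ (n : ℕ) :
    aCount (n + 1) = ∑ ij ∈ antidiagonal n, aCount ij.1 * aCount ij.2 + flatCount (n + 1) := by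
  rw [← sum_paths_succ_head?_eq_up, flatCount, aCount_eq_sum,
    ← sum_filter_add_sum_filter_not _ (·.head? = some up)]
  congr 1
  refine sum_congr (filter_congr fun p hp => ?_) fun _ _ => rfl
  rcases head?_eq_up_or_flat (mem_paths.1 hp) with h | h <;> simp [h, up, flat]

noncomputable def aSeries : PowerSeries ℚ := mk fun n => (aCount n : ℚ)

noncomputable def flatSeries : PowerSeries ℚ := mk fun n => (flatCount n : ℚ)

lemma aSeries_eq : aSeries = 1 + X * aSeries ^ 2 + flatSeries := by
  ext (_ | n)
  · simp [aSeries, flatSeries, aCount_zero, flatCount_zero]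
  · rw [map_add, map_add, coeff_one, if_neg n.succ_ne_zero, coeff_succ_X_mul, sq, coeff_mul]
    simp only [aSeries, flatSeries, coeff_mk, aCount_succ]
    push_cast
    ring

lemma flatSeries_eq : flatSeries = X * aSeries + 2 * X * flatSeries := by
  ext (_ | n)
  · simp [flatSeries, flatCount_zero]
  · simp only [two_mul, add_mul, map_add, coeff_succ_X_mul, aSeries, flatSeries, coeff_mk,
      flatCount_succ]
    push_cast
    ring

end Schroder

open Schroder PowerSeries

/-- Equation (7) of the paper: with `a(n)` the number of Schröder
paths of order `n` with horizontal runs colored in one of three colors,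
`F(x) = 1 + Σ_{n≥1} a(n)xⁿ` satisfies
`2x(2x−1)·F = 3x − 1 + √(1−10x+25x²−16x³)`. -/
theorem colored_schroder_gf (F s : PowerSeries ℚ)
    (hF : ∀ n : ℕ, PowerSeries.coeff n F = if n = 0 then 1 else (aCount n : ℚ))
    (hs0 : PowerSeries.constantCoeff s = 1)
    (hs2 : s ^ 2 = 1 - 10 * PowerSeries.X + 25 * PowerSeries.X ^ 2
        - 16 * PowerSeries.X ^ 3) :
    2 * PowerSeries.X * (2 * PowerSeries.X - 1) * F = 3 * PowerSeries.X - 1 + s := by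
  obtain rfl : F = aSeries := by
    ext n
    rw [hF, aSeries, coeff_mk]
    split_ifs with hn
    · simp [hn, aCount_zero]
    · rfl
  have hsq : (2 * X * (2 * X - 1) * aSeries - 3 * X + 1) ^ 2 = s ^ 2 := by
    rw [hs2]
    linear_combination (-4 * X * (1 - 2 * X) ^ 2) * aSeries_eq
      - 4 * X * (1 - 2 * X) * flatSeries_eq
  rcases sq_eq_sq_iff_eq_or_eq_neg.1 hsq with h | h
  · linear_combination h
  · have := congrArg constantCoeff h
    norm_num [hs0] at this
end
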